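/- Let x : [0,∞) → ℝ³ be twice differentiable and F : [0,∞) → ℝ³ satisfy F(t)·ẋ(t) = 0 for all t ≥ 0, and suppose ẍ(t) = F(t) − ∇U(x(t)) − kv·ẋ(t) for all t ≥ 0. Then the energy function V(t) = ½‖ẋ(t)‖² + U(x(t)) is differentiable with V'(t) = −kv·‖ẋ(t)‖² for all t ≥ 0; in particular V is nonincreasing along the trajectory. -/

import Mathlib

open scoped RealInnerProductSpace
open Classical

/-- The Huber potential `U` centred at the goal `xg`. -/
noncomputable def huberU (kp kv dxmax : ℝ) (xg p : EuclideanSpace ℝ (Fin 3)) : ℝ :=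
  if ‖p - xg‖ < kv * dxmax / kp then kp / 2 * ‖p - xg‖ ^ 2
  else kv * dxmax * ‖p - xg‖ - kv ^ 2 * dxmax ^ 2 / (2 * kp)

/-- The gradient of the Huber potential `U`. -/
noncomputable def gradHuberU (kp kv dxmax : ℝ) (xg p : EuclideanSpace ℝ (Fin 3)) :
    EuclideanSpace ℝ (Fin 3) :=
  if ‖p - xg‖ < kv * dxmax / kp then kp • (p - xg)
  else (kv * dxmax / ‖p - xg‖) • (p - xg)

open Set Topology

/-! `U = h ∘ ‖· - xg‖` for a scalar profile `h` that is quadratic below the radius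
`r = kv·dxmax/kp` and affine above it; both branches have value `kv²·dxmax²/(2kp)` and slope
`kv·dxmax` at `r`, so `h` is differentiable there, and near `xg` the potential is just quadratic.
Hence `U` has gradient `∇U` everywhere, and the chain rule gives
`V' = ⟪ẋ, ẍ + ∇U(x)⟫ = ⟪ẋ, F⟫ - kv‖ẋ‖² = -kv‖ẋ‖² ≤ 0`. -/

section Gradient
variable {E : Type*} [NormedAddCommGroup E] [InnerProductSpace ℝ E] [CompleteSpace E]

theorem HasDerivAt.comp_hasGradientAt {h : ℝ → ℝ} {f : E → ℝ} {d : ℝ} {g x : E}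
    (hh : HasDerivAt h d (f x)) (hf : HasGradientAt f g x) :
    HasGradientAt (fun y => h (f y)) (d • g) x := by
  rw [hasGradientAt_iff_hasFDerivAt] at hf ⊢
  refine (hh.comp_hasFDerivAt x hf).congr_fderiv ?_
  ext y
  simp

theorem hasGradientAt_norm_sub_sq (c x : E) :
    HasGradientAt (fun y => ‖y - c‖ ^ 2) ((2 : ℝ) • (x - c)) x := by
  rw [hasGradientAt_iff_hasFDerivAt]
  refine ((hasFDerivAt_id x).sub_const c).norm_sq.congr_fderiv ?_
  ext y
  simp

theorem hasGradientAt_norm_sub {c x : E} (hx : x ≠ c) :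
    HasGradientAt (fun y => ‖y - c‖) (‖x - c‖⁻¹ • (x - c)) x := by
  have hpos : 0 < ‖x - c‖ := norm_pos_iff.mpr (sub_ne_zero.mpr hx)
  have hsqrt := HasDerivAt.comp_hasGradientAt (f := fun y => ‖y - c‖ ^ 2)
    (Real.hasDerivAt_sqrt (pow_pos hpos 2).ne') (hasGradientAt_norm_sub_sq c x)
  simp only [Real.sqrt_sq (norm_nonneg _), smul_smul] at hsqrt
  convert hsqrt using 2
  field_simp

theorem hasDerivAt_half_norm_sq_add_comp {U : E → ℝ} {x v : ℝ → E} {t : ℝ} {a g : E}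
    (hx : HasDerivAt x (v t) t) (hv : HasDerivAt v a t) (hU : HasGradientAt U g (x t)) :
    HasDerivAt (fun s => 1 / 2 * ‖v s‖ ^ 2 + U (x s)) ⟪v t, a + g⟫ t := by
  have hpot : HasDerivAt (fun s => U (x s)) ⟪g, v t⟫ t :=
    (hU.hasFDerivAt.comp_hasDerivAt t hx).congr_deriv (by simp)
  refine ((hv.norm_sq.const_mul (1 / 2)).add hpot).congr_deriv ?_
  rw [inner_add_right, real_inner_comm g]
  ring

end Gradient

noncomputable def huberProfile (kp c s : ℝ) : ℝ :=
  if s < c / kp then kp / 2 * s ^ 2 else c * s - c ^ 2 / (2 * kp)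

theorem huberProfile_of_le {kp c s : ℝ} (hkp : kp ≠ 0) (hs : s ≤ c / kp) :
    huberProfile kp c s = kp / 2 * s ^ 2 := by
  rcases hs.lt_or_eq with hlt | rfl
  · exact if_pos hlt
  · rw [huberProfile, if_neg (lt_irrefl _)]
    field_simp
    ring

theorem huberProfile_of_ge {kp c s : ℝ} (hs : c / kp ≤ s) :
    huberProfile kp c s = c * s - c ^ 2 / (2 * kp) :=
  if_neg (not_lt.mpr hs)

theorem hasDerivAt_huberProfile_of_ge {kp c s : ℝ} (hkp : kp ≠ 0) (hs : c / kp ≤ s) :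
    HasDerivAt (huberProfile kp c) c s := by
  have hlin : HasDerivWithinAt (huberProfile kp c) c (Ici (c / kp)) s := by
    have : HasDerivAt (fun u => c * u - c ^ 2 / (2 * kp)) c s := by
      simpa using ((hasDerivAt_id s).const_mul c).sub_const (c ^ 2 / (2 * kp))
    exact this.hasDerivWithinAt.congr (fun u hu => huberProfile_of_ge hu) (huberProfile_of_ge hs)
  rcases hs.lt_or_eq with hlt | rfl
  · exact hlin.hasDerivAt (Ici_mem_nhds hlt)
  · have hquad : HasDerivWithinAt (huberProfile kp c) c (Iic (c / kp)) (c / kp) := by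
      have : HasDerivAt (fun u => kp / 2 * u ^ 2) c (c / kp) := by
        refine ((hasDerivAt_pow 2 (c / kp)).const_mul (kp / 2)).congr_deriv ?_
        norm_num
        field_simp
      exact this.hasDerivWithinAt.congr (fun u hu => huberProfile_of_le hkp hu)
        (huberProfile_of_le hkp le_rfl)
    rw [← hasDerivWithinAt_univ, ← Iic_union_Ici]
    exact hquad.union hlin

theorem huberU_eq_huberProfile (kp kv dxmax : ℝ) (xg p : EuclideanSpace ℝ (Fin 3)) :
    huberU kp kv dxmax xg p = huberProfile kp (kv * dxmax) ‖p - xg‖ := by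
  simp only [huberU, huberProfile, mul_pow]

theorem hasGradientAt_huberU {kp kv dxmax : ℝ} (hkp : kp ≠ 0) (hr : 0 < kv * dxmax / kp)
    (xg p : EuclideanSpace ℝ (Fin 3)) :
    HasGradientAt (huberU kp kv dxmax xg) (gradHuberU kp kv dxmax xg p) p := by
  rcases lt_or_ge ‖p - xg‖ (kv * dxmax / kp) with hin | hout
  · have hloc : huberU kp kv dxmax xg =ᶠ[𝓝 p] fun y => kp / 2 * ‖y - xg‖ ^ 2 := by
      filter_upwards [((continuous_id.sub continuous_const).norm.continuousAt).preimage_mem_nhds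
        (Iio_mem_nhds hin)] with y hy
      exact if_pos hy
    have hquad := HasDerivAt.comp_hasGradientAt (f := fun y => ‖y - xg‖ ^ 2)
      ((hasDerivAt_id _).const_mul (kp / 2)) (hasGradientAt_norm_sub_sq xg p)
    rw [gradHuberU, if_pos hin]
    convert hquad.congr_of_eventuallyEq hloc using 1
    rw [smul_smul]
    norm_num
  · have hne : p ≠ xg := fun h => by simp [h] at hout; linarith
    have hradial := HasDerivAt.comp_hasGradientAt (f := fun y => ‖y - xg‖)
      (hasDerivAt_huberProfile_of_ge hkp hout) (hasGradientAt_norm_sub hne)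
    rw [gradHuberU, if_neg (not_lt.mpr hout), div_eq_mul_inv, ← smul_smul]
    convert hradial using 1
    funext y
    exact huberU_eq_huberProfile kp kv dxmax xg y

/-- along the combined dynamics `ẍ = F − ∇U(x) − kv·ẋ` with `F ⊥ ẋ`,
the energy `V(t) = ½‖ẋ(t)‖² + U(x(t))` is differentiable with `V'(t) = −kv·‖ẋ(t)‖²`;
in particular `V` is nonincreasing along the trajectory. -/
theorem energy_decrease_along_combined_dynamics
    (kp kv dxmax : ℝ) (hkp : 0 < kp) (hkv : 0 < kv) (hdxmax : 0 < dxmax)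
    (xg : EuclideanSpace ℝ (Fin 3))
    (x v a F : ℝ → EuclideanSpace ℝ (Fin 3))
    (hx : ∀ t, 0 ≤ t → HasDerivAt x (v t) t)
    (hv : ∀ t, 0 ≤ t → HasDerivAt v (a t) t)
    (hF : ∀ t, 0 ≤ t → ⟪F t, v t⟫ = 0)
    (hacc : ∀ t, 0 ≤ t →
      a t = F t - gradHuberU kp kv dxmax xg (x t) - kv • v t) :
    (∀ t, 0 ≤ t →
      HasDerivAt (fun s => 1 / 2 * ‖v s‖ ^ 2 + huberU kp kv dxmax xg (x s))
        (-(kv * ‖v t‖ ^ 2)) t) ∧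
    (∀ s t : ℝ, 0 ≤ s → s ≤ t →
      1 / 2 * ‖v t‖ ^ 2 + huberU kp kv dxmax xg (x t) ≤
        1 / 2 * ‖v s‖ ^ 2 + huberU kp kv dxmax xg (x s)) := by
  have hderiv : ∀ t, 0 ≤ t →
      HasDerivAt (fun s => 1 / 2 * ‖v s‖ ^ 2 + huberU kp kv dxmax xg (x s))
        (-(kv * ‖v t‖ ^ 2)) t := by
    intro t ht
    have hgrad := hasGradientAt_huberU hkp.ne' (by positivity : 0 < kv * dxmax / kp) xg (x t)
    convert hasDerivAt_half_norm_sq_add_comp (hx t ht) (hv t ht) hgrad using 1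
    rw [hacc t ht, sub_right_comm, sub_add_cancel, inner_sub_right, real_inner_comm, hF t ht,
      real_inner_smul_right, real_inner_self_eq_norm_sq]
    ring
  refine ⟨hderiv, fun s t hs hst => ?_⟩
  have hderiv_nonpos : ∀ u, -(kv * ‖v u‖ ^ 2) ≤ 0 := fun u => neg_nonpos.mpr (by positivity)
  exact antitoneOn_of_hasDerivWithinAt_nonpos (convex_Ici 0)
    (fun u hu => (hderiv u hu).continuousAt.continuousWithinAt)
    (fun u hu => (hderiv u (interior_subset hu)).hasDerivWithinAt)
    (fun u _ => hderiv_nonpos u) hs (hs.trans hst) hst
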